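/- Define B : ℝ × ℝ^D → (-∞, +∞] by B(a, b) = ‖b‖²/(2a) if a > 0, B(0, 0) = 0, and B(a, b) = +∞ otherwise. Then B is convex and lower semicontinuous, and B(a, b) = sup{ α·a + ⟨β, b⟩ : (α, β) ∈ ℝ × ℝ^D, α + ‖β‖²/2 ≤ 0 }. -/

import Mathlib

open Classical

open scoped BigOperators

/-! Once `B` is shown to be the supremum of the linear functionals `(a, b) ↦ α a + ⟪β, b⟫` over
the parabola, convexity and lower semicontinuity are automatic. For `a > 0`, Cauchy–Schwarz and
AM-GM bound `α a + ⟪β, b⟫` by `‖b‖² / (2a)`, with equality at `β = b / a`, `α = -‖β‖² / 2`; for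
`a < 0` (resp. `a = 0`, `b ≠ 0`) the curves `(-s, 0)` (resp. `(-t²‖b‖²/2, t b)`) in the parabola
make the pairing unbounded. -/

/-- The Benamou–Brenier kinetic-energy integrand B(a,b) = ‖b‖²/(2a) for a > 0,
    B(0,0) = 0, +∞ otherwise. -/
noncomputable def bbFun (D : ℕ) (p : ℝ × EuclideanSpace ℝ (Fin D)) : EReal :=
  if 0 < p.1 then ((‖p.2‖ ^ 2 / (2 * p.1) : ℝ) : EReal)
  else if p.1 = 0 ∧ p.2 = 0 then 0 else ⊤

theorem EReal.biSup_coe_eq_top_of_forall_exists_le {ι : Type*} {s : Set ι} {f : ι → ℝ}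
    (h : ∀ x : ℝ, ∃ i ∈ s, x ≤ f i) : ⨆ i ∈ s, (f i : EReal) = ⊤ := by
  refine (EReal.eq_top_iff_forall_lt _).2 fun y => ?_
  obtain ⟨i, hi, hle⟩ := h (y + 1)
  calc (y : EReal) < (y + 1 : ℝ) := EReal.coe_lt_coe_iff.2 (lt_add_one y)
    _ ≤ f i := EReal.coe_le_coe_iff.2 hle
    _ ≤ ⨆ i ∈ s, (f i : EReal) := le_iSup₂ (f := fun i _ => (f i : EReal)) i hi

section SupOfLinear

variable {ι F : Type*} (s : Set ι)

theorem biSup_coe_linearMap_combo_le [AddCommGroup F] [Module ℝ F] (ℓ : ι → F →ₗ[ℝ] ℝ)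
    (p q : F) {t : ℝ} (ht0 : 0 ≤ t) (ht1 : t ≤ 1) :
    ⨆ i ∈ s, (ℓ i (t • p + (1 - t) • q) : EReal) ≤
      (t : EReal) * (⨆ i ∈ s, (ℓ i p : EReal)) +
        ((1 - t : ℝ) : EReal) * ⨆ i ∈ s, (ℓ i q : EReal) := by
  refine iSup₂_le fun i hi => ?_
  rw [map_add, map_smul, map_smul, smul_eq_mul, smul_eq_mul, EReal.coe_add, EReal.coe_mul,
    EReal.coe_mul]
  gcongr
  · exact le_iSup₂ (f := fun i _ => (ℓ i p : EReal)) i hi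
  · exact le_iSup₂ (f := fun i _ => (ℓ i q : EReal)) i hi

theorem lowerSemicontinuous_biSup_coe_continuousLinearMap [TopologicalSpace F] [AddCommGroup F]
    [Module ℝ F] (ℓ : ι → F →L[ℝ] ℝ) :
    LowerSemicontinuous fun p => ⨆ i ∈ s, (ℓ i p : EReal) :=
  lowerSemicontinuous_biSup fun i _ =>
    (continuous_coe_real_ereal.comp (ℓ i).continuous).lowerSemicontinuous

end SupOfLinear

def parabola (E : Type*) [Norm E] : Set (ℝ × E) := {q | q.1 + ‖q.2‖ ^ 2 / 2 ≤ 0}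

theorem mk_neg_half_norm_sq_mem_parabola {E : Type*} [Norm E] (β : E) :
    ((-‖β‖ ^ 2 / 2, β) : ℝ × E) ∈ parabola E := by
  simp only [parabola, Set.mem_ofPred_eq]
  linarith

section Parabola

variable {E : Type*} [NormedAddCommGroup E] [InnerProductSpace ℝ E]

noncomputable def prodInner (q : ℝ × E) : ℝ × E →L[ℝ] ℝ :=
  q.1 • ContinuousLinearMap.fst ℝ ℝ E + (innerSL ℝ q.2).comp (ContinuousLinearMap.snd ℝ ℝ E)

theorem prodInner_apply (q p : ℝ × E) : prodInner q p = q.1 * p.1 + inner ℝ q.2 p.2 := rfl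

noncomputable def parabolaSupport (p : ℝ × E) : EReal :=
  ⨆ q ∈ parabola E, (prodInner q p : EReal)

theorem prodInner_le_of_mem_parabola {q p : ℝ × E} (hq : q ∈ parabola E) (ha : 0 < p.1) :
    prodInner q p ≤ ‖p.2‖ ^ 2 / (2 * p.1) := by
  obtain ⟨α, β⟩ := q
  obtain ⟨a, b⟩ := p
  simp only [parabola, Set.mem_ofPred_eq] at hq
  rw [prodInner_apply, le_div_iff₀ (by positivity)]
  nlinarith [real_inner_le_norm β b, sq_nonneg (‖b‖ - ‖β‖ * a), mul_le_mul_of_nonneg_right hq ha.le]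

theorem parabolaSupport_of_pos {p : ℝ × E} (ha : 0 < p.1) :
    parabolaSupport p = ((‖p.2‖ ^ 2 / (2 * p.1) : ℝ) : EReal) := by
  obtain ⟨a, b⟩ := p
  refine le_antisymm (iSup₂_le fun q hq => EReal.coe_le_coe_iff.2
    (prodInner_le_of_mem_parabola hq ha)) ?_
  refine le_trans (le_of_eq ?_) (le_iSup₂ (f := fun q _ => (prodInner q (a, b) : EReal)) _
    (mk_neg_half_norm_sq_mem_parabola (a⁻¹ • b)))
  rw [EReal.coe_eq_coe_iff, prodInner_apply, norm_smul, real_inner_smul_left,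
    real_inner_self_eq_norm_sq, Real.norm_eq_abs, abs_inv, abs_of_pos ha]
  field_simp
  ring

theorem parabolaSupport_zero : parabolaSupport (0 : ℝ × E) = 0 :=
  le_antisymm (iSup₂_le fun q _ => by simp)
    (le_trans (by simp) (le_iSup₂ (f := fun q _ => (prodInner q (0 : ℝ × E) : EReal)) 0
      (by simp [parabola])))

theorem parabolaSupport_of_neg {p : ℝ × E} (ha : p.1 < 0) : parabolaSupport p = ⊤ := by
  refine EReal.biSup_coe_eq_top_of_forall_exists_le fun x => ⟨(|x| / p.1, 0), ?_, ?_⟩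
  · simpa [parabola] using div_nonpos_of_nonneg_of_nonpos (abs_nonneg x) ha.le
  · simpa [prodInner_apply, div_mul_cancel₀ _ ha.ne] using le_abs_self x

theorem parabolaSupport_of_fst_eq_zero {p : ℝ × E} (ha : p.1 = 0) (hb : p.2 ≠ 0) :
    parabolaSupport p = ⊤ := by
  refine EReal.biSup_coe_eq_top_of_forall_exists_le fun x => ?_
  set β := (|x| / ‖p.2‖ ^ 2) • p.2
  refine ⟨(-‖β‖ ^ 2 / 2, β), mk_neg_half_norm_sq_mem_parabola β, ?_⟩
  have hb2 : ‖p.2‖ ^ 2 ≠ 0 := by positivity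
  rw [prodInner_apply, ha, real_inner_smul_left, real_inner_self_eq_norm_sq,
    div_mul_cancel₀ _ hb2, mul_zero, zero_add]
  exact le_abs_self x

theorem parabolaSupport_combo_le (p q : ℝ × E) {t : ℝ} (ht0 : 0 ≤ t) (ht1 : t ≤ 1) :
    parabolaSupport (t • p + (1 - t) • q) ≤
      (t : EReal) * parabolaSupport p + ((1 - t : ℝ) : EReal) * parabolaSupport q :=
  biSup_coe_linearMap_combo_le (parabola E) (fun q => (prodInner q).toLinearMap) p q ht0 ht1

theorem lowerSemicontinuous_parabolaSupport : LowerSemicontinuous (parabolaSupport (E := E)) :=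
  lowerSemicontinuous_biSup_coe_continuousLinearMap (parabola E) prodInner

end Parabola

theorem bbFun_eq_parabolaSupport (D : ℕ) : bbFun D = parabolaSupport := by
  ext ⟨a, b⟩
  rcases lt_trichotomy a 0 with ha | rfl | ha
  · rw [bbFun, if_neg ha.not_gt, if_neg fun h => ha.ne h.1, parabolaSupport_of_neg ha]
  · by_cases hb : b = 0
    · subst hb
      simp [bbFun, ← Prod.zero_eq_mk, parabolaSupport_zero]
    · rw [bbFun, if_neg (lt_irrefl 0), if_neg fun h => hb h.2,
        parabolaSupport_of_fst_eq_zero rfl hb]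
  · rw [bbFun, if_pos ha, parabolaSupport_of_pos ha]

/-- B is convex, lower semicontinuous, and is the support function of the parabolic set
    P = {(α, β) : α + ‖β‖²/2 ≤ 0}. -/
theorem bbFun_convex_lsc_support (D : ℕ) :
    (∀ (p q : ℝ × EuclideanSpace ℝ (Fin D)) (t : ℝ), 0 ≤ t → t ≤ 1 →
        bbFun D (t • p + (1 - t) • q) ≤
          (t : EReal) * bbFun D p + ((1 - t : ℝ) : EReal) * bbFun D q) ∧
      LowerSemicontinuous (bbFun D) ∧
      (∀ p : ℝ × EuclideanSpace ℝ (Fin D),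
        bbFun D p =
          ⨆ q ∈ {q : ℝ × EuclideanSpace ℝ (Fin D) | q.1 + ‖q.2‖ ^ 2 / 2 ≤ 0},
            ((q.1 * p.1 + (inner ℝ q.2 p.2 : ℝ) : ℝ) : EReal)) := by
  rw [bbFun_eq_parabolaSupport]
  exact ⟨fun p q t ht0 ht1 => parabolaSupport_combo_le p q ht0 ht1,
    lowerSemicontinuous_parabolaSupport, fun p => rfl⟩
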